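/- Let n ≥ 2 and let G ⊊ ℝⁿ be a domain whose boundary ∂G is unbounded (equivalently, ∞ ∈ ∂G in the one-point compactification). Then for all x,y ∈ G: s_G(x,y) ≤ r_G(x,y). -/
import Mathlib


open EuclideanGeometry Real Set Filter

/-- The triangular ratio metric `s_G(x,y) = sup_{z ∈ ∂G} |x−y|/(|x−z|+|z−y|)`. -/
noncomputable def triangularRatio {n : ℕ} (G : Set (EuclideanSpace ℝ (Fin n)))
    (x y : EuclideanSpace ℝ (Fin n)) : ℝ :=
  sSup ((fun z => dist x y / (dist x z + dist z y)) '' frontier G)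

/-- The Ptolemaic angular metric
`r_G(x,y) = sup_{z,w ∈ ∂G, z≠w} |z−w||x−y|/(|z−x||w−y|+|z−y||w−x|)`. -/
noncomputable def ptolemaicAngular {n : ℕ} (G : Set (EuclideanSpace ℝ (Fin n)))
    (x y : EuclideanSpace ℝ (Fin n)) : ℝ :=
  sSup {r : ℝ | ∃ z ∈ frontier G, ∃ w ∈ frontier G, z ≠ w ∧
    r = dist z w * dist x y / (dist z x * dist w y + dist z y * dist w x)}

theorem stmt14 (n : ℕ) (hn : 2 ≤ n) (G : Set (EuclideanSpace ℝ (Fin n)))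
    (hGopen : IsOpen G) (hGconn : IsConnected G) (hGproper : G ≠ Set.univ)
    (hGunbdd : ¬ Bornology.IsBounded (frontier G)) :
    ∀ x ∈ G, ∀ y ∈ G, triangularRatio G x y ≤ ptolemaicAngular G x y := by
  intro x hx y hy
  -- boundary points are not in G
  have hfr : ∀ z ∈ frontier G, z ∉ G := by
    intro z hz
    rw [hGopen.frontier_eq] at hz
    exact hz.2
  -- unboundedness: big boundary points exist
  have hbig : ∀ C : ℝ, ∃ w ∈ frontier G, C < ‖w‖ := by
    intro C
    by_contra h
    push_neg at h
    exact hGunbdd (isBounded_iff_forall_norm_le.2 ⟨C, h⟩)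
  set Rset : Set ℝ := {r : ℝ | ∃ z ∈ frontier G, ∃ w ∈ frontier G, z ≠ w ∧
    r = dist z w * dist x y / (dist z x * dist w y + dist z y * dist w x)} with hRset
  -- every element of Rset is in [0,1]
  have hmem_le : ∀ r ∈ Rset, 0 ≤ r ∧ r ≤ 1 := by
    rintro r ⟨z, hz, w, hw, hzw, rfl⟩
    have hzx : 0 < dist z x := dist_pos.2 fun h => hfr z hz (h ▸ hx)
    have hwy : 0 < dist w y := dist_pos.2 fun h => hfr w hw (h ▸ hy)
    have hden : 0 < dist z x * dist w y + dist z y * dist w x :=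
      lt_of_lt_of_le (mul_pos hzx hwy) (le_add_of_nonneg_right (by positivity))
    constructor
    · positivity
    · rw [div_le_one hden]
      calc dist z w * dist x y ≤ dist z x * dist w y + dist x w * dist z y :=
            mul_dist_le_mul_dist_add_mul_dist z x w y
        _ = dist z x * dist w y + dist z y * dist w x := by rw [dist_comm x w]; ring
  have hbdd : BddAbove Rset := ⟨1, fun r hr => (hmem_le r hr).2⟩
  -- Rset is nonempty
  have hne : Rset.Nonempty := by
    obtain ⟨z, hz, -⟩ := hbig 0
    obtain ⟨w, hw, hwz⟩ := hbig ‖z‖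
    exact ⟨_, z, hz, w, hw, fun h => absurd rfl (h ▸ hwz).ne, rfl⟩
  have hsup0 : 0 ≤ sSup Rset :=
    le_trans (hmem_le _ hne.choose_spec).1 (le_csSup hbdd hne.choose_spec)
  -- main bound via Real.sSup_le
  apply Real.sSup_le _ hsup0
  rintro a ⟨z, hz, rfl⟩
  have hzx : 0 < dist z x := dist_pos.2 fun h => hfr z hz (h ▸ hx)
  have hzy : 0 < dist z y := dist_pos.2 fun h => hfr z hz (h ▸ hy)
  set A := dist x y
  set S := dist x z + dist z y with hS
  have hSpos : 0 < S := by rw [hS, dist_comm x z]; positivity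
  set C := 2 * (dist z x * dist z y) with hC
  have hCpos : 0 < C := by positivity
  -- choose boundary points far away
  have hseq : ∀ k : ℕ, ∃ w ∈ frontier G, (k : ℝ) < dist z w := by
    intro k
    obtain ⟨w, hw, hwn⟩ := hbig (‖z‖ + k)
    refine ⟨w, hw, ?_⟩
    have := norm_sub_norm_le w z
    have hd : dist z w = ‖w - z‖ := by rw [dist_comm, dist_eq_norm]
    rw [hd]; linarith
  choose w hwfr hwd using hseq
  -- the comparison sequence
  set g : ℕ → ℝ := fun k => dist z (w k) * A / (dist z (w k) * S + C) with hg
  -- each g k is ≤ sSup Rset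
  have hgle : ∀ k, g k ≤ sSup Rset := by
    intro k
    have hdzw : 0 < dist z (w k) := lt_of_le_of_lt (Nat.cast_nonneg k) (hwd k)
    have hzw : z ≠ w k := fun h => by simp [← h] at hdzw
    have hwy : 0 < dist (w k) y := dist_pos.2 fun h => hfr (w k) (hwfr k) (h ▸ hy)
    have hden : 0 < dist z x * dist (w k) y + dist z y * dist (w k) x :=
      lt_of_lt_of_le (mul_pos hzx hwy) (le_add_of_nonneg_right (by positivity))
    have hdenle : dist z x * dist (w k) y + dist z y * dist (w k) x
        ≤ dist z (w k) * S + C := by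
      have h1 : dist (w k) y ≤ dist (w k) z + dist z y := dist_triangle _ _ _
      have h2 : dist (w k) x ≤ dist (w k) z + dist z x := dist_triangle _ _ _
      have h3 : dist (w k) z = dist z (w k) := dist_comm _ _
      have h4 : dist x z = dist z x := dist_comm _ _
      rw [hS, hC, h4]
      nlinarith [hzx.le, hzy.le]
    have step1 : g k ≤ dist z (w k) * A /
        (dist z x * dist (w k) y + dist z y * dist (w k) x) := by
      apply div_le_div_of_nonneg_left _ hden hdenle
      positivity
    refine le_trans step1 (le_csSup hbdd ?_)
    exact ⟨z, hz, w k, hwfr k, hzw, rfl⟩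
  -- g tends to A / S
  have hmtop : Tendsto (fun k : ℕ => dist z (w k)) atTop atTop :=
    tendsto_atTop_mono (fun k => (hwd k).le) tendsto_natCast_atTop_atTop
  have htend0 : Tendsto (fun r : ℝ => r * A / (r * S + C)) atTop (nhds (A / S)) := by
    have h1 : Tendsto (fun r : ℝ => A / (S + C / r)) atTop (nhds (A / S)) := by
      have : Tendsto (fun r : ℝ => S + C / r) atTop (nhds (S + 0)) :=
        tendsto_const_nhds.add (tendsto_const_nhds.div_atTop tendsto_id)
      rw [add_zero] at this
      exact tendsto_const_nhds.div this hSpos.ne'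
    refine h1.congr' ?_
    filter_upwards [eventually_gt_atTop (0 : ℝ)] with r hr
    have hd1 : S + C / r ≠ 0 := by positivity
    have hd2 : r * S + C ≠ 0 := by positivity
    field_simp
  have htend : Tendsto g atTop (nhds (A / S)) := htend0.comp hmtop
  exact le_of_tendsto htend (Eventually.of_forall hgle)
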